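/- arXiv:1403.6883 — 3 statements merged into one kernel-verified Lean document; each statement's English description precedes it below -/
import Mathlib

section
/- Let ψ be a supercell trigonometric polynomial. Then ψ is shift-orthogonal if and only if for every residue r ∈ {0, 1, …, N−1} one has Σ_{j ∈ ℤ} |c_{r+Nj}(ψ)|² = 1/N². (This is the paper's Theorem 1, stating that shift-orthogonality is equivalent to the Fourier coefficient mass on each Brillouin-zone fiber being constant equal to 1/(N·|Ω|) with |Ω| = N.) -/
open MeasureTheory Complex
open scoped BigOperators Real

/-- A supercell trigonometric polynomial with finitely supported Fourier
coefficients `c : ℤ →₀ ℂ`: `ψ(x) = ∑ₙ cₙ e^{2πi n x / N}`. -/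
noncomputable def scFun (N : ℕ) (c : ℤ →₀ ℂ) : ℝ → ℂ :=
  fun x => ∑ n ∈ c.support, c n * Complex.exp (2 * Real.pi * Complex.I * (n : ℂ) * (x : ℂ) / (N : ℂ))

/-- `ψ` is shift-orthogonal: for every integer `m`,
`∫₀ᴺ conj(ψ(x − m)) ψ(x) dx = 1` if `N ∣ m` and `0` otherwise. -/
def ShiftOrthoFun (N : ℕ) (ψ : ℝ → ℂ) : Prop :=
  ∀ m : ℤ, (∫ x in (0:ℝ)..(N:ℝ), (starRingEnd ℂ) (ψ (x - (m : ℝ))) * ψ x)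
    = if (N : ℤ) ∣ m then 1 else 0

/- ### Auxiliary lemmas -/

/-- Character orthogonality: `∑_{j<N} e^{2πi k j/N} = N·δ_{N∣k}`. -/
lemma char_sum (N : ℕ) (hN : 0 < N) (k : ℤ) :
    ∑ j ∈ Finset.range N, Complex.exp (2 * Real.pi * Complex.I * (k : ℂ) * (j : ℂ) / (N : ℂ))
      = if (N : ℤ) ∣ k then (N : ℂ) else 0 := by
  have hNC : (N : ℂ) ≠ 0 := Nat.cast_ne_zero.mpr hN.ne'
  have h2 : (2 : ℂ) * Real.pi * Complex.I ≠ 0 := by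
    simp [Real.pi_ne_zero, Complex.I_ne_zero, Complex.ofReal_ne_zero]
  set x : ℂ := Complex.exp (2 * Real.pi * Complex.I * k / N) with hx
  have hterm : ∀ j : ℕ, Complex.exp (2 * Real.pi * Complex.I * (k : ℂ) * (j : ℂ) / (N : ℂ)) = x ^ j := by
    intro j
    rw [hx, ← Complex.exp_nat_mul]
    congr 1; ring
  rw [Finset.sum_congr rfl fun j _ => hterm j]
  have hx1 : x = 1 ↔ (N : ℤ) ∣ k := by
    rw [hx, Complex.exp_eq_one_iff]
    constructor
    · rintro ⟨j, hj⟩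
      refine ⟨j, ?_⟩
      have harg : ((k : ℂ) / N) * (2 * Real.pi * Complex.I) = (j : ℂ) * (2 * Real.pi * Complex.I) := by
        rw [← hj]; ring
      have hkj : (k : ℂ) / N = j := mul_right_cancel₀ h2 harg
      rw [div_eq_iff hNC] at hkj
      have : k = j * (N : ℤ) := by exact_mod_cast hkj
      rw [this]; ring
    · rintro ⟨j, hj⟩
      refine ⟨j, ?_⟩
      rw [hj]
      push_cast
      field_simp
  by_cases h : (N : ℤ) ∣ k
  · rw [if_pos h, hx1.mpr h]
    simp
  · rw [if_neg h]
    have hxne : x ≠ 1 := fun hh => h (hx1.mp hh)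
    rw [geom_sum_eq hxne]
    have hxN : x ^ N = 1 := by
      rw [hx, ← Complex.exp_nat_mul,
        show (N : ℂ) * (2 * Real.pi * Complex.I * k / N) = (k : ℂ) * (2 * Real.pi * Complex.I) from by
          field_simp]
      exact Complex.exp_int_mul_two_pi_mul_I k
    rw [hxN]
    simp

/-- `∫₀ᴺ e^{2πi k x/N} dx = N·δ_{k=0}`. -/
lemma integral_char (N : ℕ) (hN : 0 < N) (k : ℤ) :
    (∫ x in (0:ℝ)..(N:ℝ), Complex.exp (2 * Real.pi * Complex.I * (k : ℂ) * (x : ℂ) / (N : ℂ)))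
      = if k = 0 then (N : ℂ) else 0 := by
  have hNC : (N : ℂ) ≠ 0 := Nat.cast_ne_zero.mpr hN.ne'
  by_cases hk : k = 0
  · rw [if_pos hk]
    simp [hk]
  · rw [if_neg hk]
    have hc : (2 * (Real.pi : ℂ) * Complex.I * k / N) ≠ 0 := by
      exact div_ne_zero (mul_ne_zero (mul_ne_zero (mul_ne_zero two_ne_zero (Complex.ofReal_ne_zero.mpr Real.pi_ne_zero)) Complex.I_ne_zero) (Int.cast_ne_zero.mpr hk)) hNC
    have hrw : ∀ x : ℝ, 2 * (Real.pi : ℂ) * Complex.I * (k : ℂ) * (x : ℂ) / (N : ℂ)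
        = (2 * (Real.pi : ℂ) * Complex.I * k / N) * (x : ℂ) := fun x => by ring
    simp_rw [hrw]
    rw [integral_exp_mul_complex hc]
    have h1 : Complex.exp ((2 * (Real.pi : ℂ) * Complex.I * k / N) * ((N : ℝ) : ℂ)) = 1 := by
      rw [show ((2 * (Real.pi : ℂ) * Complex.I * k / N) * ((N : ℝ) : ℂ)) = (k : ℂ) * (2 * Real.pi * Complex.I) from by
        push_cast; field_simp]
      exact Complex.exp_int_mul_two_pi_mul_I k
    rw [h1]
    simp

/-- The exponential `e^{2πi a m/N}` only depends on `a` mod `N`. -/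
lemma exp_eq_of_dvd (N : ℕ) (hN : 0 < N) (a b m : ℤ) (h : (N : ℤ) ∣ a - b) :
    Complex.exp (2 * Real.pi * Complex.I * (a : ℂ) * (m : ℂ) / (N : ℂ))
      = Complex.exp (2 * Real.pi * Complex.I * (b : ℂ) * (m : ℂ) / (N : ℂ)) := by
  have hNC : (N : ℂ) ≠ 0 := Nat.cast_ne_zero.mpr hN.ne'
  obtain ⟨j, hj⟩ := h
  have ha : (a : ℂ) = (b : ℂ) + (N : ℂ) * (j : ℂ) := by
    have : a = b + (N : ℤ) * j := by rw [← hj]; ring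
    exact_mod_cast this
  rw [show 2 * (Real.pi : ℂ) * Complex.I * (a : ℂ) * (m : ℂ) / (N : ℂ)
      = 2 * (Real.pi : ℂ) * Complex.I * (b : ℂ) * (m : ℂ) / (N : ℂ) + ((j * m : ℤ) : ℂ) * (2 * Real.pi * Complex.I) from by
    rw [ha]; push_cast; field_simp]
  rw [Complex.exp_add, Complex.exp_int_mul_two_pi_mul_I, mul_one]

/-- The shift-correlation integral in terms of the Fourier coefficients. -/
lemma inner_eq (N : ℕ) (hN : 0 < N) (c : ℤ →₀ ℂ) (m : ℤ) :
    (∫ x in (0:ℝ)..(N:ℝ), (starRingEnd ℂ) (scFun N c (x - (m : ℝ))) * scFun N c x)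
      = (N : ℂ) * ∑ n ∈ c.support,
          ((‖c n‖ : ℂ)) ^ 2 * Complex.exp (2 * Real.pi * Complex.I * (n : ℂ) * (m : ℂ) / (N : ℂ)) := by
  have hNC : (N : ℂ) ≠ 0 := Nat.cast_ne_zero.mpr hN.ne'
  have key : ∀ x : ℝ, (starRingEnd ℂ) (scFun N c (x - (m : ℝ))) * scFun N c x
      = ∑ q ∈ c.support ×ˢ c.support,
          ((starRingEnd ℂ) (c q.1) * c q.2
              * Complex.exp (2 * Real.pi * Complex.I * (q.1 : ℂ) * (m : ℂ) / (N : ℂ)))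
            * Complex.exp (2 * Real.pi * Complex.I * ((q.2 - q.1 : ℤ) : ℂ) * (x : ℂ) / (N : ℂ)) := by
    intro x
    rw [Finset.sum_product]
    unfold scFun
    rw [map_sum (starRingEnd ℂ), Finset.sum_mul_sum]
    refine Finset.sum_congr rfl fun n hn => Finset.sum_congr rfl fun p hp => ?_
    rw [map_mul, ← Complex.exp_conj]
    have hconj : (starRingEnd ℂ) (2 * (Real.pi : ℂ) * Complex.I * (n : ℂ) * ((x - (m : ℝ) : ℝ) : ℂ) / (N : ℂ))
        = -(2 * (Real.pi : ℂ) * Complex.I * (n : ℂ) * ((x - (m : ℝ) : ℝ) : ℂ) / (N : ℂ)) := by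
      simp [map_div₀, Complex.conj_I, map_ofNat]
      ring
    rw [hconj]
    have h1 : Complex.exp (-(2 * (Real.pi : ℂ) * Complex.I * (n : ℂ) * ((x - (m : ℝ) : ℝ) : ℂ) / (N : ℂ)))
          * Complex.exp (2 * Real.pi * Complex.I * (p : ℂ) * (x : ℂ) / (N : ℂ))
        = Complex.exp (2 * Real.pi * Complex.I * (n : ℂ) * (m : ℂ) / (N : ℂ))
          * Complex.exp (2 * Real.pi * Complex.I * ((p - n : ℤ) : ℂ) * (x : ℂ) / (N : ℂ)) := by
      rw [← Complex.exp_add, ← Complex.exp_add]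
      congr 1
      push_cast
      field_simp
      ring
    calc (starRingEnd ℂ) (c n)
            * Complex.exp (-(2 * (Real.pi : ℂ) * Complex.I * (n : ℂ) * ((x - (m : ℝ) : ℝ) : ℂ) / (N : ℂ)))
            * (c p * Complex.exp (2 * Real.pi * Complex.I * (p : ℂ) * (x : ℂ) / (N : ℂ)))
        = (starRingEnd ℂ) (c n) * c p
            * (Complex.exp (-(2 * (Real.pi : ℂ) * Complex.I * (n : ℂ) * ((x - (m : ℝ) : ℝ) : ℂ) / (N : ℂ)))
              * Complex.exp (2 * Real.pi * Complex.I * (p : ℂ) * (x : ℂ) / (N : ℂ))) := by ring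
      _ = ((starRingEnd ℂ) (c n) * c p
            * Complex.exp (2 * Real.pi * Complex.I * (n : ℂ) * (m : ℂ) / (N : ℂ)))
            * Complex.exp (2 * Real.pi * Complex.I * ((p - n : ℤ) : ℂ) * (x : ℂ) / (N : ℂ)) := by
          rw [h1]; ring
  simp only [key]
  rw [intervalIntegral.integral_finset_sum]
  · have step : ∀ q ∈ c.support ×ˢ c.support,
        (∫ x in (0:ℝ)..(N:ℝ),
          ((starRingEnd ℂ) (c q.1) * c q.2
              * Complex.exp (2 * Real.pi * Complex.I * (q.1 : ℂ) * (m : ℂ) / (N : ℂ)))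
            * Complex.exp (2 * Real.pi * Complex.I * ((q.2 - q.1 : ℤ) : ℂ) * (x : ℂ) / (N : ℂ)))
        = ((starRingEnd ℂ) (c q.1) * c q.2
              * Complex.exp (2 * Real.pi * Complex.I * (q.1 : ℂ) * (m : ℂ) / (N : ℂ)))
            * (if q.2 - q.1 = 0 then (N : ℂ) else 0) := by
      intro q _
      rw [intervalIntegral.integral_const_mul, integral_char N hN]
    rw [Finset.sum_congr rfl step, Finset.sum_product]
    have inner : ∀ n ∈ c.support,
        (∑ p ∈ c.support,
          ((starRingEnd ℂ) (c n) * c p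
              * Complex.exp (2 * Real.pi * Complex.I * (n : ℂ) * (m : ℂ) / (N : ℂ)))
            * (if p - n = 0 then (N : ℂ) else 0))
        = ((‖c n‖ : ℂ)) ^ 2 * Complex.exp (2 * Real.pi * Complex.I * (n : ℂ) * (m : ℂ) / (N : ℂ)) * N := by
      intro n hn
      rw [Finset.sum_eq_single n]
      · rw [if_pos (sub_self n)]
        have hcc : (starRingEnd ℂ) (c n) * c n = ((‖c n‖ : ℂ)) ^ 2 := by
          rw [mul_comm, Complex.mul_conj, Complex.normSq_eq_norm_sq]
          push_cast
          ring
        rw [show (starRingEnd ℂ) (c n) * c n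
              * Complex.exp (2 * Real.pi * Complex.I * (n : ℂ) * (m : ℂ) / (N : ℂ)) * (N : ℂ)
            = ((starRingEnd ℂ) (c n) * c n)
              * Complex.exp (2 * Real.pi * Complex.I * (n : ℂ) * (m : ℂ) / (N : ℂ)) * (N : ℂ) from by ring,
          hcc]
      · intro p _ hpn
        rw [if_neg (sub_ne_zero.mpr hpn), mul_zero]
      · intro hn'
        exact absurd hn hn'
    rw [Finset.sum_congr rfl inner, ← Finset.sum_mul, mul_comm]
  · intro q _
    apply Continuous.intervalIntegrable
    fun_prop

/-- The fiber mass as a finite sum. -/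
lemma tsum_fiber (N : ℕ) (hN : 0 < N) (c : ℤ →₀ ℂ) (r : ℤ) :
    (∑' j : ℤ, ‖c (r + (N : ℤ) * j)‖ ^ 2)
      = ∑ n ∈ c.support.filter (fun n => (N : ℤ) ∣ n - r), ‖c n‖ ^ 2 := by
  classical
  have hNZ : (N : ℤ) ≠ 0 := by exact_mod_cast hN.ne'
  have h0 : ∀ j : ℤ,
      j ∉ (c.support.filter (fun n => (N : ℤ) ∣ n - r)).image (fun n => (n - r) / N) →
      ‖c (r + (N : ℤ) * j)‖ ^ 2 = 0 := by
    intro j hj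
    by_contra hne
    have hc : c (r + (N : ℤ) * j) ≠ 0 := by
      intro h; apply hne; rw [h]; simp
    apply hj
    refine Finset.mem_image.mpr ⟨r + (N : ℤ) * j, ?_, ?_⟩
    · exact Finset.mem_filter.mpr ⟨Finsupp.mem_support_iff.mpr hc, ⟨j, by ring⟩⟩
    · rw [show r + (N : ℤ) * j - r = (N : ℤ) * j from by ring, Int.mul_ediv_cancel_left _ hNZ]
  have hinj : ∀ a ∈ c.support.filter (fun n => (N : ℤ) ∣ n - r),
      ∀ b ∈ c.support.filter (fun n => (N : ℤ) ∣ n - r),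
      (a - r) / (N : ℤ) = (b - r) / (N : ℤ) → a = b := by
    intro a ha b hb hab
    have hda := (Finset.mem_filter.mp ha).2
    have hdb := (Finset.mem_filter.mp hb).2
    have : a - r = b - r := by
      rw [← Int.mul_ediv_cancel' hda, ← Int.mul_ediv_cancel' hdb, hab]
    omega
  rw [tsum_eq_sum h0, Finset.sum_image hinj]
  refine Finset.sum_congr rfl fun n hn => ?_
  have hd : (N : ℤ) ∣ n - r := (Finset.mem_filter.mp hn).2
  have hX : r + (N : ℤ) * ((n - r) / N) = n := by
    rw [Int.mul_ediv_cancel' hd]; ring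
  rw [hX]

/-- **Theorem 1 of the paper.** A supercell trigonometric polynomial is
shift-orthogonal iff each Brillouin-zone fiber mass equals `1/N²`. -/
theorem shiftOrtho_iff_fiber_mass (N : ℕ) (hN : 0 < N) (c : ℤ →₀ ℂ) :
    ShiftOrthoFun N (scFun N c) ↔
      ∀ r ∈ Finset.range N,
        (∑' j : ℤ, ‖c ((r : ℤ) + (N : ℤ) * j)‖ ^ 2) = 1 / (N : ℝ) ^ 2 := by
  classical
  have hNC : (N : ℂ) ≠ 0 := Nat.cast_ne_zero.mpr hN.ne'
  have hNR : (N : ℝ) ≠ 0 := Nat.cast_ne_zero.mpr hN.ne'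
  constructor
  · intro H r hr
    rw [tsum_fiber N hN c (r : ℤ)]
    have hFm : ∀ m : ℤ, (N : ℂ) * ∑ n ∈ c.support,
        ((‖c n‖ : ℂ)) ^ 2 * Complex.exp (2 * Real.pi * Complex.I * (n : ℂ) * (m : ℂ) / (N : ℂ))
        = if (N : ℤ) ∣ m then 1 else 0 := by
      intro m
      rw [← inner_eq N hN c m]
      exact H m
    have hFm' : ∀ m : ℕ, (∑ n ∈ c.support,
        ((‖c n‖ : ℂ)) ^ 2 * Complex.exp (2 * Real.pi * Complex.I * (n : ℂ) * (m : ℂ) / (N : ℂ)))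
        = (if (N : ℤ) ∣ (m : ℤ) then 1 else 0) / N := by
      intro m
      have h := hFm (m : ℤ)
      push_cast at h
      rw [eq_div_iff hNC, mul_comm]
      exact h
    have hway1 : ∑ m ∈ Finset.range N,
        ((if (N : ℤ) ∣ (m : ℤ) then (1 : ℂ) else 0) / N)
          * Complex.exp (2 * Real.pi * Complex.I * ((-(r : ℤ) : ℤ) : ℂ) * (m : ℂ) / (N : ℂ)) = 1 / N := by
      rw [Finset.sum_eq_single 0]
      · simp
      · intro b hb hb0
        rw [if_neg, zero_div, zero_mul]
        intro hdvd
        have h1 : (N : ℤ) ≤ b := Int.le_of_dvd (by exact_mod_cast Nat.pos_of_ne_zero hb0) hdvd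
        have h2 : b < N := Finset.mem_range.mp hb
        omega
      · intro h
        exact absurd (Finset.mem_range.mpr hN) h
    have hway2 : ∑ m ∈ Finset.range N,
        (∑ n ∈ c.support,
          ((‖c n‖ : ℂ)) ^ 2 * Complex.exp (2 * Real.pi * Complex.I * (n : ℂ) * (m : ℂ) / (N : ℂ)))
          * Complex.exp (2 * Real.pi * Complex.I * ((-(r : ℤ) : ℤ) : ℂ) * (m : ℂ) / (N : ℂ))
        = (N : ℂ) * ∑ n ∈ c.support.filter (fun n => (N : ℤ) ∣ n - (r : ℤ)), ((‖c n‖ : ℂ)) ^ 2 := by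
      have hswap : ∀ m ∈ Finset.range N,
          (∑ n ∈ c.support,
            ((‖c n‖ : ℂ)) ^ 2 * Complex.exp (2 * Real.pi * Complex.I * (n : ℂ) * (m : ℂ) / (N : ℂ)))
            * Complex.exp (2 * Real.pi * Complex.I * ((-(r : ℤ) : ℤ) : ℂ) * (m : ℂ) / (N : ℂ))
          = ∑ n ∈ c.support,
            ((‖c n‖ : ℂ)) ^ 2 * Complex.exp (2 * Real.pi * Complex.I * ((n - (r : ℤ) : ℤ) : ℂ) * (m : ℂ) / (N : ℂ)) := by
        intro m _
        rw [Finset.sum_mul]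
        refine Finset.sum_congr rfl fun n _ => ?_
        rw [mul_assoc, ← Complex.exp_add]
        congr 2
        push_cast
        field_simp
        ring
      rw [Finset.sum_congr rfl hswap, Finset.sum_comm]
      have hchar : ∀ n ∈ c.support,
          ∑ m ∈ Finset.range N,
            ((‖c n‖ : ℂ)) ^ 2 * Complex.exp (2 * Real.pi * Complex.I * ((n - (r : ℤ) : ℤ) : ℂ) * (m : ℂ) / (N : ℂ))
          = ((‖c n‖ : ℂ)) ^ 2 * (if (N : ℤ) ∣ (n - (r : ℤ)) then (N : ℂ) else 0) := by
        intro n _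
        rw [← Finset.mul_sum, char_sum N hN (n - (r : ℤ))]
      rw [Finset.sum_congr rfl hchar]
      have hsplit : ∀ n ∈ c.support,
          ((‖c n‖ : ℂ)) ^ 2 * (if (N : ℤ) ∣ (n - (r : ℤ)) then (N : ℂ) else 0)
          = if (N : ℤ) ∣ (n - (r : ℤ)) then (N : ℂ) * ((‖c n‖ : ℂ)) ^ 2 else 0 := by
        intro n _
        split_ifs <;> ring
      rw [Finset.sum_congr rfl hsplit, ← Finset.sum_filter, Finset.mul_sum]
    have hcomb : (N : ℂ) * ∑ n ∈ c.support.filter (fun n => (N : ℤ) ∣ n - (r : ℤ)), ((‖c n‖ : ℂ)) ^ 2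
        = 1 / N := by
      rw [← hway2, Finset.sum_congr rfl fun m hm => by rw [hFm' m], hway1]
    have hC : (∑ n ∈ c.support.filter (fun n => (N : ℤ) ∣ n - (r : ℤ)), ((‖c n‖ : ℂ)) ^ 2)
        = 1 / (N : ℂ) ^ 2 := by
      field_simp at hcomb ⊢
      linear_combination hcomb
    have hC' : ((∑ n ∈ c.support.filter (fun n => (N : ℤ) ∣ n - (r : ℤ)), ‖c n‖ ^ 2 : ℝ) : ℂ)
        = ((1 / (N : ℝ) ^ 2 : ℝ) : ℂ) := by
      push_cast
      exact hC
    exact Complex.ofReal_inj.mp hC'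
  · intro H m
    rw [inner_eq N hN c m]
    have HS : ∀ r ∈ Finset.range N,
        (∑ n ∈ c.support.filter (fun n => (N : ℤ) ∣ n - (r : ℤ)), ‖c n‖ ^ 2) = 1 / (N : ℝ) ^ 2 := by
      intro r hr
      rw [← tsum_fiber N hN c (r : ℤ)]
      exact H r hr
    have hmap : ∀ n ∈ c.support, (n % (N : ℤ)).toNat ∈ Finset.range N := by
      intro n _
      refine Finset.mem_range.mpr ?_
      have h1 : 0 ≤ n % (N : ℤ) := Int.emod_nonneg n (by exact_mod_cast hN.ne')
      have h2 : n % (N : ℤ) < N := Int.emod_lt_of_pos n (by exact_mod_cast hN)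
      omega
    rw [← Finset.sum_fiberwise_of_maps_to hmap
      (fun n => ((‖c n‖ : ℂ)) ^ 2 * Complex.exp (2 * Real.pi * Complex.I * (n : ℂ) * (m : ℂ) / (N : ℂ)))]
    have hfiber : ∀ r ∈ Finset.range N,
        (∑ n ∈ c.support.filter (fun n => (n % (N : ℤ)).toNat = r),
          ((‖c n‖ : ℂ)) ^ 2 * Complex.exp (2 * Real.pi * Complex.I * (n : ℂ) * (m : ℂ) / (N : ℂ)))
        = (1 / (N : ℂ) ^ 2) * Complex.exp (2 * Real.pi * Complex.I * ((r : ℤ) : ℂ) * (m : ℂ) / (N : ℂ)) := by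
      intro r hr
      have hr1 : (0 : ℤ) ≤ (r : ℤ) := Int.natCast_nonneg r
      have hr2 : (r : ℤ) < (N : ℤ) := by exact_mod_cast Finset.mem_range.mp hr
      have hfe : c.support.filter (fun n => (n % (N : ℤ)).toNat = r)
          = c.support.filter (fun n => (N : ℤ) ∣ n - (r : ℤ)) := by
        apply Finset.filter_congr
        intro n _
        constructor
        · intro h
          have h1 : 0 ≤ n % (N : ℤ) := Int.emod_nonneg n (by exact_mod_cast hN.ne')
          have h2 : n % (N : ℤ) = (r : ℤ) := by omega
          exact Int.dvd_self_sub_of_emod_eq h2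
        · rintro ⟨j, hj⟩
          have hn : n = (r : ℤ) + (N : ℤ) * j := by omega
          rw [hn, Int.add_mul_emod_self_left, Int.emod_eq_of_lt hr1 hr2]
          exact Int.toNat_natCast r
      rw [hfe]
      have hexp : ∀ n ∈ c.support.filter (fun n => (N : ℤ) ∣ n - (r : ℤ)),
          ((‖c n‖ : ℂ)) ^ 2 * Complex.exp (2 * Real.pi * Complex.I * (n : ℂ) * (m : ℂ) / (N : ℂ))
          = ((‖c n‖ : ℂ)) ^ 2 * Complex.exp (2 * Real.pi * Complex.I * ((r : ℤ) : ℂ) * (m : ℂ) / (N : ℂ)) := by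
        intro n hn
        rw [exp_eq_of_dvd N hN n (r : ℤ) m (Finset.mem_filter.mp hn).2]
      rw [Finset.sum_congr rfl hexp, ← Finset.sum_mul]
      congr 1
      have hs := HS r hr
      have : (∑ n ∈ c.support.filter (fun n => (N : ℤ) ∣ n - (r : ℤ)), ((‖c n‖ : ℂ)) ^ 2)
          = ((∑ n ∈ c.support.filter (fun n => (N : ℤ) ∣ n - (r : ℤ)), ‖c n‖ ^ 2 : ℝ) : ℂ) := by
        push_cast
        rfl
      rw [this, hs]
      push_cast
      ring
    rw [Finset.sum_congr rfl hfiber, ← Finset.mul_sum]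
    have hc2 : ∑ r ∈ Finset.range N,
        Complex.exp (2 * Real.pi * Complex.I * ((r : ℤ) : ℂ) * (m : ℂ) / (N : ℂ))
        = if (N : ℤ) ∣ m then (N : ℂ) else 0 := by
      rw [← char_sum N hN m]
      refine Finset.sum_congr rfl fun j _ => ?_
      congr 1
      push_cast
      ring
    rw [hc2]
    by_cases hd : (N : ℤ) ∣ m
    · rw [if_pos hd, if_pos hd]
      field_simp
    · rw [if_neg hd, if_neg hd]
      ring
end

section
/- Let ψ and φ be supercell trigonometric polynomials. Then ∫_0^N conj(ψ(x − m)) φ(x − m') dx = 0 for all integers m and m' if and only if for every residue r ∈ {0, 1, …, N−1} one has Σ_{j ∈ ℤ} conj(c_{r+Nj}(ψ)) · c_{r+Nj}(φ) = 0. (This is the paper's Theorem 2: mutual orthogonality of all lattice translates of ψ and φ is equivalent to fiberwise orthogonality of their Fourier coefficients.) -/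
open MeasureTheory Complex
open scoped BigOperators Real

lemma key_int (N : ℕ) (hN : 0 < N) (d : ℤ) :
    (∫ x in (0:ℝ)..(N:ℝ), Complex.exp ((2 * Real.pi * Complex.I * d / N) * x))
      = if d = 0 then (N : ℂ) else 0 := by
  have hNC : (N : ℂ) ≠ 0 := Nat.cast_ne_zero.mpr hN.ne'
  rcases eq_or_ne d 0 with h | h
  · subst h; simp
  · have hc : (2 * (Real.pi:ℂ) * Complex.I * d / N : ℂ) ≠ 0 := by
      apply div_ne_zero _ hNC
      simp [Real.pi_ne_zero, Complex.I_ne_zero, h, Complex.ofReal_ne_zero]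
    rw [integral_exp_mul_complex hc]
    have h1 : (2 * (Real.pi:ℂ) * Complex.I * d / N) * (N:ℂ) = (d:ℂ) * (2 * Real.pi * Complex.I) := by
      field_simp
    rw [if_neg h]
    push_cast
    rw [h1, Complex.exp_int_mul_two_pi_mul_I]
    simp

lemma root_sum (N : ℕ) (hN : 0 < N) (r r' : ℕ) (hr : r < N) (hr' : r' < N) :
    (∑ k ∈ Finset.range N, Complex.exp (2 * Real.pi * Complex.I * ((r':ℂ) - (r:ℂ)) * (k:ℂ) / N))
      = if r' = r then (N:ℂ) else 0 := by
  have hNC : (N : ℂ) ≠ 0 := Nat.cast_ne_zero.mpr hN.ne'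
  have hz : ∀ k : ℕ, Complex.exp (2 * Real.pi * Complex.I * ((r':ℂ) - (r:ℂ)) * (k:ℂ) / N)
      = (Complex.exp (2 * Real.pi * Complex.I * ((r':ℂ) - (r:ℂ)) / N)) ^ k := by
    intro k
    rw [← Complex.exp_nat_mul]
    congr 1
    ring
  simp only [hz]
  rcases eq_or_ne r' r with h | h
  · subst h
    simp
  · rw [if_neg h]
    set z := Complex.exp (2 * Real.pi * Complex.I * ((r':ℂ) - (r:ℂ)) / N) with hzd
    have hzne : z ≠ 1 := by
      intro hz1
      rw [hzd, Complex.exp_eq_one_iff] at hz1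
      obtain ⟨n, hn⟩ := hz1
      have h2pi : (2 * (Real.pi:ℂ) * Complex.I) ≠ 0 := by
        simp [Real.pi_ne_zero, Complex.I_ne_zero, Complex.ofReal_ne_zero]
      have hcast : ((r':ℂ) - (r:ℂ)) = (n:ℂ) * (N:ℂ) := by
        field_simp at hn
        apply mul_left_cancel₀ h2pi
        linear_combination (2 * (Real.pi:ℂ) * Complex.I) * hn
      have hint : (r' : ℤ) - (r : ℤ) = n * N := by exact_mod_cast hcast
      have hdvd : (N:ℤ) ∣ ((r':ℤ) - r) := ⟨n, by linarith [hint]⟩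
      have habs : |((r':ℤ) - r)| < N := by
        rw [abs_lt]
        constructor <;> omega
      have := Int.eq_zero_of_abs_lt_dvd hdvd habs
      have : (r':ℤ) = r := by omega
      exact h (by exact_mod_cast this)
    rw [geom_sum_eq hzne]
    have hzN : z ^ N = 1 := by
      rw [hzd, ← Complex.exp_nat_mul]
      have : (N:ℂ) * (2 * Real.pi * Complex.I * ((r':ℂ) - (r:ℂ)) / N)
          = (((r':ℤ) - r : ℤ):ℂ) * (2 * Real.pi * Complex.I) := by
        push_cast
        field_simp
      rw [this, Complex.exp_int_mul_two_pi_mul_I]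
    rw [hzN]
    simp

lemma integral_formula (N : ℕ) (hN : 0 < N) (cψ cφ : ℤ →₀ ℂ) (m m' : ℤ) :
    (∫ x in (0:ℝ)..(N:ℝ),
        (starRingEnd ℂ) (scFun N cψ (x - (m : ℝ))) * scFun N cφ (x - (m' : ℝ)))
    = (N:ℂ) * ∑ n ∈ cψ.support, (starRingEnd ℂ) (cψ n) * cφ n *
        Complex.exp (2 * Real.pi * Complex.I * (n:ℂ) * ((m:ℂ) - (m':ℂ)) / N) := by
  have hNC : (N : ℂ) ≠ 0 := Nat.cast_ne_zero.mpr hN.ne'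
  have hmul : ∀ (a b u v : ℂ), (a * Complex.exp u) * (b * Complex.exp v)
      = a * b * Complex.exp (u + v) := by
    intro a b u v; rw [Complex.exp_add]; ring
  have hpt : ∀ x : ℝ,
      (starRingEnd ℂ) (scFun N cψ (x - (m : ℝ))) * scFun N cφ (x - (m' : ℝ))
      = ∑ n ∈ cψ.support, ∑ n' ∈ cφ.support,
          ((starRingEnd ℂ) (cψ n) * cφ n'
            * Complex.exp (2 * Real.pi * Complex.I * ((n:ℂ) * m - (n':ℂ) * m') / N))
          * Complex.exp ((2 * Real.pi * Complex.I * (((n':ℤ) - n : ℤ):ℂ) / N) * (x:ℂ)) := by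
    intro x
    unfold scFun
    rw [map_sum, Finset.sum_mul_sum]
    refine Finset.sum_congr rfl fun n _ => Finset.sum_congr rfl fun n' _ => ?_
    rw [map_mul, ← Complex.exp_conj, hmul, mul_assoc ((starRingEnd ℂ) (cψ n) * cφ n'),
      ← Complex.exp_add]
    congr 2
    simp only [map_mul, map_div₀, Complex.conj_I, Complex.conj_ofReal, map_intCast,
      map_natCast, map_ofNat]
    push_cast
    field_simp
    ring
  rw [intervalIntegral.integral_congr (g := fun x => ∑ n ∈ cψ.support, ∑ n' ∈ cφ.support,
          ((starRingEnd ℂ) (cψ n) * cφ n'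
            * Complex.exp (2 * Real.pi * Complex.I * ((n:ℂ) * m - (n':ℂ) * m') / N))
          * Complex.exp ((2 * Real.pi * Complex.I * (((n':ℤ) - n : ℤ):ℂ) / N) * (x:ℂ)))
      (fun x _ => hpt x)]
  rw [intervalIntegral.integral_finset_sum]
  swap
  · intro n _
    apply Continuous.intervalIntegrable
    fun_prop
  have hinner : ∀ n ∈ cψ.support,
      (∫ x in (0:ℝ)..(N:ℝ), ∑ n' ∈ cφ.support,
          ((starRingEnd ℂ) (cψ n) * cφ n'
            * Complex.exp (2 * Real.pi * Complex.I * ((n:ℂ) * m - (n':ℂ) * m') / N))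
          * Complex.exp ((2 * Real.pi * Complex.I * (((n':ℤ) - n : ℤ):ℂ) / N) * (x:ℂ)))
      = (N:ℂ) * ((starRingEnd ℂ) (cψ n) * cφ n *
        Complex.exp (2 * Real.pi * Complex.I * (n:ℂ) * ((m:ℂ) - (m':ℂ)) / N)) := by
    intro n _
    rw [intervalIntegral.integral_finset_sum]
    swap
    · intro n' _
      apply Continuous.intervalIntegrable
      fun_prop
    have hterm : ∀ n' ∈ cφ.support,
        (∫ x in (0:ℝ)..(N:ℝ),
          ((starRingEnd ℂ) (cψ n) * cφ n'
            * Complex.exp (2 * Real.pi * Complex.I * ((n:ℂ) * m - (n':ℂ) * m') / N))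
          * Complex.exp ((2 * Real.pi * Complex.I * (((n':ℤ) - n : ℤ):ℂ) / N) * (x:ℂ)))
        = if n' = n then ((starRingEnd ℂ) (cψ n) * cφ n'
            * Complex.exp (2 * Real.pi * Complex.I * ((n:ℂ) * m - (n':ℂ) * m') / N)) * N else 0 := by
      intro n' _
      rw [intervalIntegral.integral_const_mul, key_int N hN (n' - n)]
      rcases eq_or_ne n' n with h | h
      · simp [h]
      · rw [if_neg (sub_ne_zero.mpr h), if_neg h, mul_zero]
    rw [Finset.sum_congr rfl hterm, Finset.sum_ite_eq' cφ.support n]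
    by_cases hn : n ∈ cφ.support
    · rw [if_pos hn]
      have he : (2:ℂ) * Real.pi * Complex.I * ((n:ℂ) * m - (n:ℂ) * m') / N
          = 2 * Real.pi * Complex.I * (n:ℂ) * ((m:ℂ) - (m':ℂ)) / N := by ring
      rw [he]; ring
    · rw [if_neg hn]
      have : cφ n = 0 := Finsupp.notMem_support_iff.mp hn
      rw [this]
      ring
  rw [Finset.sum_congr rfl hinner, ← Finset.mul_sum]

lemma inversion (N : ℕ) (hN : 0 < N) (T : ℕ → ℂ)
    (h : ∀ k : ℤ, (∑ r ∈ Finset.range N,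
      T r * Complex.exp (2 * Real.pi * Complex.I * (r:ℂ) * (k:ℂ) / N)) = 0)
    (r : ℕ) (hr : r < N) : T r = 0 := by
  have hNC : (N : ℂ) ≠ 0 := Nat.cast_ne_zero.mpr hN.ne'
  have key : (∑ r' ∈ Finset.range N, T r' *
      (∑ k ∈ Finset.range N,
        Complex.exp (2 * Real.pi * Complex.I * ((r':ℂ) - (r:ℂ)) * (k:ℂ) / N))) = 0 := by
    calc (∑ r' ∈ Finset.range N, T r' *
        (∑ k ∈ Finset.range N,
          Complex.exp (2 * Real.pi * Complex.I * ((r':ℂ) - (r:ℂ)) * (k:ℂ) / N)))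
        = ∑ k ∈ Finset.range N, ∑ r' ∈ Finset.range N,
            T r' * Complex.exp (2 * Real.pi * Complex.I * ((r':ℂ) - (r:ℂ)) * (k:ℂ) / N) := by
          rw [Finset.sum_comm]
          exact Finset.sum_congr rfl fun r' _ => Finset.mul_sum _ _ _
      _ = ∑ k ∈ Finset.range N,
            (∑ r' ∈ Finset.range N,
              T r' * Complex.exp (2 * Real.pi * Complex.I * (r':ℂ) * (k:ℂ) / N))
            * Complex.exp (-(2 * Real.pi * Complex.I * (r:ℂ) * (k:ℂ) / N)) := by
          refine Finset.sum_congr rfl fun k _ => ?_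
          rw [Finset.sum_mul]
          refine Finset.sum_congr rfl fun r' _ => ?_
          rw [mul_assoc (T r') (Complex.exp _) (Complex.exp _), ← Complex.exp_add]
          congr 2
          ring
      _ = 0 := by
          refine Finset.sum_eq_zero fun k _ => ?_
          have := h (k : ℤ)
          push_cast at this
          rw [this, zero_mul]
  rw [Finset.sum_congr rfl (fun r' hr' =>
    by rw [root_sum N hN r r' hr (Finset.mem_range.mp hr')])] at key
  simp only [mul_ite, mul_zero] at key
  rw [Finset.sum_ite_eq' (Finset.range N) r, if_pos (Finset.mem_range.mpr hr)] at key
  exact (mul_eq_zero.mp key).resolve_right hNC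

/-- **Theorem 2 of the paper.** All lattice translates of `ψ` and `φ` are
mutually orthogonal iff their Fourier coefficients are orthogonal on each
Brillouin-zone fiber. -/
theorem translates_orthogonal_iff_fiberwise (N : ℕ) (hN : 0 < N) (cψ cφ : ℤ →₀ ℂ) :
    (∀ m m' : ℤ, (∫ x in (0:ℝ)..(N:ℝ),
        (starRingEnd ℂ) (scFun N cψ (x - (m : ℝ))) * scFun N cφ (x - (m' : ℝ))) = 0) ↔
      ∀ r ∈ Finset.range N,
        (∑' j : ℤ, (starRingEnd ℂ) (cψ ((r : ℤ) + (N : ℤ) * j)) * cφ ((r : ℤ) + (N : ℤ) * j)) = 0 := by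
  classical
  have hNC : (N : ℂ) ≠ 0 := Nat.cast_ne_zero.mpr hN.ne'
  have hNZ : (N : ℤ) ≠ 0 := by exact_mod_cast hN.ne'
  set a : ℤ → ℂ := fun n => (starRingEnd ℂ) (cψ n) * cφ n with ha
  set T : ℕ → ℂ := fun r => ∑ n ∈ cψ.support.filter (fun n => n % (N:ℤ) = (r:ℤ)), a n with hT
  -- the tsum equals the fiber sum
  have htsum : ∀ r : ℕ, r < N →
      (∑' j : ℤ, (starRingEnd ℂ) (cψ ((r : ℤ) + (N : ℤ) * j)) * cφ ((r : ℤ) + (N : ℤ) * j)) = T r := by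
    intro r hr
    have hrmod : (r : ℤ) % N = r := Int.emod_eq_of_lt (by positivity) (by exact_mod_cast hr)
    set g : ℤ → ℤ := fun j => (r:ℤ) + N * j with hg
    have hginj : Function.Injective g := by
      intro j1 j2 hj
      simp only [hg, add_right_inj] at hj
      exact mul_left_cancel₀ hNZ hj
    set s := cψ.support.filter (fun n => n % (N:ℤ) = (r:ℤ)) with hs
    have hgr : ∀ j : ℤ, g j % N = r := by
      intro j
      simp only [hg]
      rw [Int.add_mul_emod_self_left, hrmod]
    have h1 : (∑' j : ℤ, a (g j)) = ∑ j ∈ s.preimage g hginj.injOn, a (g j) := by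
      apply tsum_eq_sum
      intro j hj
      rw [Finset.mem_preimage] at hj
      have : g j ∉ cψ.support := by
        intro hmem
        exact hj (Finset.mem_filter.mpr ⟨hmem, hgr j⟩)
      have hz : cψ (g j) = 0 := Finsupp.notMem_support_iff.mp this
      simp [ha, hz]
    have h2 : (∑ j ∈ s.preimage g hginj.injOn, a (g j)) = ∑ n ∈ s, a n := by
      apply Finset.sum_preimage
      intro x hx hx'
      exfalso
      apply hx'
      rw [hs, Finset.mem_filter] at hx
      refine ⟨x / N, ?_⟩
      simp only [hg]
      have := Int.emod_add_mul_ediv x N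
      rw [hx.2] at this
      linarith [this]
    exact h1.trans h2
  -- the diagonal sum in terms of fibers
  have hF : ∀ k : ℤ,
      (∑ n ∈ cψ.support, a n * Complex.exp (2 * Real.pi * Complex.I * (n:ℂ) * (k:ℂ) / N))
      = ∑ r ∈ Finset.range N, T r * Complex.exp (2 * Real.pi * Complex.I * (r:ℂ) * (k:ℂ) / N) := by
    intro k
    have hres : ∀ n : ℤ, Complex.exp (2 * Real.pi * Complex.I * (n:ℂ) * (k:ℂ) / N)
        = Complex.exp (2 * Real.pi * Complex.I * ((n % (N:ℤ) : ℤ):ℂ) * (k:ℂ) / N) := by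
      intro n
      rw [Complex.exp_eq_exp_iff_exists_int]
      refine ⟨n / N * k, ?_⟩
      have hn : (n:ℂ) = ((n % (N:ℤ) : ℤ):ℂ) + (N:ℂ) * ((n / (N:ℤ) : ℤ):ℂ) := by
        exact_mod_cast congrArg (Int.cast : ℤ → ℂ) (Int.emod_add_mul_ediv n N).symm
      push_cast
      field_simp
      linear_combination (k:ℂ) * hn
    have hmaps : ∀ n ∈ cψ.support, (n % (N:ℤ)).toNat ∈ Finset.range N := by
      intro n _
      rw [Finset.mem_range]
      have h0 : 0 ≤ n % (N:ℤ) := Int.emod_nonneg n hNZ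
      have h1 : n % (N:ℤ) < N := Int.emod_lt_of_pos n (by exact_mod_cast hN)
      omega
    calc (∑ n ∈ cψ.support, a n * Complex.exp (2 * Real.pi * Complex.I * (n:ℂ) * (k:ℂ) / N))
        = ∑ n ∈ cψ.support,
            a n * Complex.exp (2 * Real.pi * Complex.I * ((n % (N:ℤ) : ℤ):ℂ) * (k:ℂ) / N) := by
          exact Finset.sum_congr rfl fun n _ => by rw [hres n]
      _ = ∑ r ∈ Finset.range N, ∑ n ∈ cψ.support.filter (fun n => (n % (N:ℤ)).toNat = r),
            a n * Complex.exp (2 * Real.pi * Complex.I * ((n % (N:ℤ) : ℤ):ℂ) * (k:ℂ) / N) :=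
          (Finset.sum_fiberwise_of_maps_to hmaps _).symm
      _ = ∑ r ∈ Finset.range N, T r * Complex.exp (2 * Real.pi * Complex.I * (r:ℂ) * (k:ℂ) / N) := by
          refine Finset.sum_congr rfl fun r hr => ?_
          rw [Finset.mem_range] at hr
          have hfeq : cψ.support.filter (fun n => (n % (N:ℤ)).toNat = r)
              = cψ.support.filter (fun n => n % (N:ℤ) = (r:ℤ)) := by
            apply Finset.filter_congr
            intro n _
            have h0 : 0 ≤ n % (N:ℤ) := Int.emod_nonneg n hNZ
            constructor
            · intro h; omega
            · intro h; omega
          rw [hfeq, hT, Finset.sum_mul]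
          refine Finset.sum_congr rfl fun n hn => ?_
          rw [Finset.mem_filter] at hn
          rw [hn.2]
          push_cast
          ring
  constructor
  · intro h r hr
    rw [Finset.mem_range] at hr
    rw [htsum r hr]
    refine inversion N hN T ?_ r hr
    intro k
    rw [← hF k]
    have := h k 0
    rw [integral_formula N hN cψ cφ k 0] at this
    have h2 : (∑ n ∈ cψ.support, a n *
        Complex.exp (2 * Real.pi * Complex.I * (n:ℂ) * ((k:ℂ) - ((0:ℤ):ℂ)) / N)) = 0 :=
      (mul_eq_zero.mp this).resolve_left hNC
    simpa using h2
  · intro h m m'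
    rw [integral_formula N hN cψ cφ m m']
    have hT0 : ∀ r ∈ Finset.range N, T r = 0 := by
      intro r hr
      rw [← htsum r (Finset.mem_range.mp hr)]
      exact h r hr
    have : (∑ n ∈ cψ.support, a n *
        Complex.exp (2 * Real.pi * Complex.I * (n:ℂ) * (((m - m' : ℤ)):ℂ) / N)) = 0 := by
      rw [hF (m - m')]
      exact Finset.sum_eq_zero fun r hr => by rw [hT0 r hr, zero_mul]
    push_cast at this
    rw [this, mul_zero]
end

section
/- Let f be a supercell trigonometric polynomial such that M_r := Σ_{j ∈ ℤ} |c_{r+Nj}(f)|² > 0 for every residue r ∈ {0, 1, …, N−1}. Define ψ to be the supercell trigonometric polynomial with Fourier coefficients c_n(ψ) = c_n(f) / (N · √(M_{n mod N})) for every n ∈ ℤ. Then ψ is shift-orthogonal, and for every shift-orthogonal supercell trigonometric polynomial φ one has ∫_0^N |f(x) − ψ(x)|² dx ≤ ∫_0^N |f(x) − φ(x)|² dx; that is, ψ solves the shift-orthogonal projection problem Π̂f = argmin ‖f − ψ‖₂ subject to shift-orthogonality. (This is the correctness of the paper's projection algorithm derived from Theorem 1 and Parseval's identity.) -/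
open MeasureTheory Complex
open scoped BigOperators Real

/-- fiber mass of a coefficient family at residue `r` -/
noncomputable def fibS (N : ℕ) (c : ℤ →₀ ℂ) (r : ℤ) : ℝ :=
  ∑ k ∈ c.support.filter (fun k => k % (N:ℤ) = r), ‖c k‖^2

lemma sc_integral_exp (N : ℕ) (hN : 0 < N) (d : ℤ) :
    (∫ x in (0:ℝ)..(N:ℝ), Complex.exp (2 * Real.pi * Complex.I * (d : ℂ) * (x : ℂ) / (N : ℂ)))
      = if d = 0 then (N:ℂ) else 0 := by
  have hNC : (N:ℂ) ≠ 0 := Nat.cast_ne_zero.mpr hN.ne'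
  by_cases hd : d = 0
  · simp [hd]
  · rw [if_neg hd]
    have hc : (2 * Real.pi * Complex.I * (d:ℂ) / (N:ℂ)) ≠ 0 := by
      apply div_ne_zero _ hNC
      simp [Real.pi_ne_zero, Complex.I_ne_zero, Complex.ext_iff]
      intro h; exact absurd (by exact_mod_cast h) hd
    have heq : ∀ x : ℝ, 2 * Real.pi * Complex.I * (d : ℂ) * (x : ℂ) / (N : ℂ)
        = (2 * Real.pi * Complex.I * (d:ℂ) / (N:ℂ)) * x := by intro x; ring
    simp_rw [heq]
    rw [integral_exp_mul_complex hc]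
    have h1 : (2 * Real.pi * Complex.I * (d:ℂ) / (N:ℂ)) * (N:ℂ) = d * (2*Real.pi*Complex.I) := by
      field_simp
    push_cast
    rw [h1, Complex.exp_int_mul_two_pi_mul_I]
    simp

lemma sc_geom_sum (N : ℕ) (hN : 0 < N) (d : ℤ) :
    ∑ j ∈ Finset.range N, Complex.exp (2 * Real.pi * Complex.I * (d : ℂ) / (N : ℂ)) ^ j
      = if (N:ℤ) ∣ d then (N:ℂ) else 0 := by
  have hNC : (N:ℂ) ≠ 0 := Nat.cast_ne_zero.mpr hN.ne'
  set z := Complex.exp (2 * Real.pi * Complex.I * (d : ℂ) / (N : ℂ)) with hz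
  by_cases hdvd : (N:ℤ) ∣ d
  · obtain ⟨q, hq⟩ := hdvd
    have hz1 : z = 1 := by
      rw [hz, Complex.exp_eq_one_iff]
      exact ⟨q, by rw [hq]; push_cast; field_simp⟩
    simp [hz1, hq, Dvd.intro q rfl]
  · rw [if_neg hdvd]
    have hz1 : z ≠ 1 := by
      rw [hz, Ne, Complex.exp_eq_one_iff]
      rintro ⟨n, hn⟩
      apply hdvd
      have : (d : ℂ) = (n : ℂ) * (N : ℂ) := by
        field_simp at hn
        have h2 : (2 * Real.pi * Complex.I : ℂ) ≠ 0 := by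
          simp [Real.pi_ne_zero, Complex.I_ne_zero]
        have h3 : (2*Real.pi*Complex.I) * (d:ℂ) = (2*Real.pi*Complex.I) * ((n:ℂ)*(N:ℂ)) := by
          linear_combination (2*Real.pi*Complex.I) * hn
        exact mul_left_cancel₀ h2 h3
      exact ⟨n, by exact_mod_cast this.trans (mul_comm (n:ℂ) (N:ℂ))⟩
    have hzN : z ^ N = 1 := by
      rw [hz, ← Complex.exp_nat_mul, Complex.exp_eq_one_iff]
      exact ⟨d, by field_simp⟩
    rw [geom_sum_eq hz1, hzN]
    simp

lemma sc_inner (N : ℕ) (hN : 0 < N) (c c' : ℤ →₀ ℂ) (m : ℤ) :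
    (∫ x in (0:ℝ)..(N:ℝ), (starRingEnd ℂ) (scFun N c (x - (m:ℝ))) * scFun N c' x)
      = N * ∑ k ∈ c.support, (starRingEnd ℂ) (c k) * c' k *
          Complex.exp (2 * Real.pi * Complex.I * (k : ℂ) * (m : ℂ) / (N : ℂ)) := by
  have key : ∀ x : ℝ, (starRingEnd ℂ) (scFun N c (x - (m:ℝ))) * scFun N c' x
      = ∑ k ∈ c.support, ∑ n ∈ c'.support,
          (starRingEnd ℂ) (c k) * c' n *
            Complex.exp (2 * Real.pi * Complex.I * (k : ℂ) * (m : ℂ) / (N : ℂ)) *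
            Complex.exp (2 * Real.pi * Complex.I * ((n : ℂ) - (k : ℂ)) * (x : ℂ) / (N : ℂ)) := by
    intro x
    rw [scFun, scFun, map_sum, Finset.sum_mul_sum]
    refine Finset.sum_congr rfl fun k _ => Finset.sum_congr rfl fun n _ => ?_
    rw [map_mul, ← Complex.exp_conj]
    rw [mul_mul_mul_comm, ← Complex.exp_add, mul_assoc ((starRingEnd ℂ) (c k) * c' n),
      ← Complex.exp_add]
    congr 1
    simp only [map_div₀, map_mul, Complex.conj_I, Complex.conj_ofReal, map_ofNat,
      map_intCast, map_natCast]
    push_cast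
    ring
  simp_rw [key]
  rw [intervalIntegral.integral_finset_sum]
  · have inner : ∀ k ∈ c.support,
        (∫ x in (0:ℝ)..(N:ℝ), ∑ n ∈ c'.support,
          (starRingEnd ℂ) (c k) * c' n *
            Complex.exp (2 * Real.pi * Complex.I * (k : ℂ) * (m : ℂ) / (N : ℂ)) *
            Complex.exp (2 * Real.pi * Complex.I * ((n : ℂ) - (k : ℂ)) * (x : ℂ) / (N : ℂ)))
        = (N : ℂ) * ((starRingEnd ℂ) (c k) * c' k *
            Complex.exp (2 * Real.pi * Complex.I * (k : ℂ) * (m : ℂ) / (N : ℂ))) := by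
      intro k _
      rw [intervalIntegral.integral_finset_sum]
      · have term : ∀ n ∈ c'.support,
            (∫ x in (0:ℝ)..(N:ℝ),
              (starRingEnd ℂ) (c k) * c' n *
                Complex.exp (2 * Real.pi * Complex.I * (k : ℂ) * (m : ℂ) / (N : ℂ)) *
                Complex.exp (2 * Real.pi * Complex.I * ((n : ℂ) - (k : ℂ)) * (x : ℂ) / (N : ℂ)))
            = if n = k then (N:ℂ) * ((starRingEnd ℂ) (c k) * c' n *
                Complex.exp (2 * Real.pi * Complex.I * (k : ℂ) * (m : ℂ) / (N : ℂ))) else 0 := by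
          intro n _
          rw [intervalIntegral.integral_const_mul]
          have hcast : ((n : ℂ) - (k : ℂ)) = ((n - k : ℤ) : ℂ) := by push_cast; ring
          simp_rw [hcast]
          rw [sc_integral_exp N hN (n - k)]
          by_cases h : n = k
          · simp [h]; ring
          · rw [if_neg (sub_ne_zero.mpr (by exact_mod_cast h)), if_neg h, mul_zero]
        rw [Finset.sum_congr rfl term, Finset.sum_ite_eq' c'.support k]
        by_cases hk : k ∈ c'.support
        · rw [if_pos hk]
        · rw [if_neg hk]
          have : c' k = 0 := Finsupp.notMem_support_iff.mp hk
          simp [this]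
      · intro n _
        apply Continuous.intervalIntegrable
        fun_prop
    rw [Finset.sum_congr rfl inner, ← Finset.mul_sum]
  · intro k _
    apply Continuous.intervalIntegrable
    apply continuous_finset_sum
    intro n _
    fun_prop

lemma sc_exp_mod (N : ℕ) (hN : 0 < N) (k m : ℤ) :
    Complex.exp (2 * Real.pi * Complex.I * (k : ℂ) * (m : ℂ) / (N : ℂ))
      = Complex.exp (2 * Real.pi * Complex.I * ((k % (N:ℤ) : ℤ) : ℂ) * (m : ℂ) / (N : ℂ)) := by
  have hNC : (N:ℂ) ≠ 0 := Nat.cast_ne_zero.mpr hN.ne'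
  have hk : (k:ℂ) = ((N:ℂ) * ((k / (N:ℤ) : ℤ) : ℂ) + ((k % (N:ℤ) : ℤ) : ℂ)) := by
    have := Int.mul_ediv_add_emod k (N:ℤ)
    push_cast
    exact_mod_cast congrArg (Int.cast : ℤ → ℂ) this.symm
  have harg : 2 * Real.pi * Complex.I * (k : ℂ) * (m : ℂ) / (N : ℂ)
      = 2 * Real.pi * Complex.I * ((k % (N:ℤ) : ℤ) : ℂ) * (m : ℂ) / (N : ℂ)
        + ((k / (N:ℤ)) * m : ℤ) * (2 * Real.pi * Complex.I) := by
    rw [hk]; push_cast; field_simp; ring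
  rw [harg, Complex.exp_add, Complex.exp_int_mul_two_pi_mul_I, mul_one]

lemma sc_fiber_decomp (N : ℕ) (hN : 0 < N) (s : Finset ℤ) {α : Type*} [AddCommMonoid α]
    (h : ℤ → α) :
    ∑ k ∈ s, h k
      = ∑ r ∈ Finset.range N, ∑ k ∈ s.filter (fun k => k % (N:ℤ) = (r:ℤ)), h k := by
  have hmap : ∀ k ∈ s, (k % (N:ℤ)).toNat ∈ Finset.range N := by
    intro k _
    rw [Finset.mem_range]
    have h1 : 0 ≤ k % (N:ℤ) := Int.emod_nonneg k (by exact_mod_cast hN.ne')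
    have h2 : k % (N:ℤ) < N := Int.emod_lt_of_pos k (by exact_mod_cast hN)
    omega
  rw [← Finset.sum_fiberwise_of_maps_to hmap h]
  refine Finset.sum_congr rfl fun r hr => ?_
  congr 1
  apply Finset.filter_congr
  intro k _
  have h1 : 0 ≤ k % (N:ℤ) := Int.emod_nonneg k (by exact_mod_cast hN.ne')
  constructor
  · intro h'; simp only [← h']; omega
  · intro h'; simp only [h']; omega

lemma sc_ortho_eval (N : ℕ) (hN : 0 < N) (c : ℤ →₀ ℂ) (m : ℤ) :
    (∫ x in (0:ℝ)..(N:ℝ), (starRingEnd ℂ) (scFun N c (x - (m:ℝ))) * scFun N c x)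
      = N * ∑ r ∈ Finset.range N, ((fibS N c (r:ℤ) : ℝ) : ℂ) *
          Complex.exp (2 * Real.pi * Complex.I * ((r:ℕ) : ℂ) * (m : ℂ) / (N : ℂ)) := by
  rw [sc_inner N hN c c m]
  congr 1
  have hterm : ∀ k ∈ c.support, (starRingEnd ℂ) (c k) * c k *
      Complex.exp (2 * Real.pi * Complex.I * (k : ℂ) * (m : ℂ) / (N : ℂ))
      = ((‖c k‖^2 : ℝ) : ℂ) *
        Complex.exp (2 * Real.pi * Complex.I * ((k % (N:ℤ) : ℤ) : ℂ) * (m : ℂ) / (N : ℂ)) := by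
    intro k _
    rw [← sc_exp_mod N hN k m]
    congr 1
    rw [mul_comm, Complex.mul_conj']
    norm_cast
  rw [Finset.sum_congr rfl hterm, sc_fiber_decomp N hN c.support]
  refine Finset.sum_congr rfl fun r hr => ?_
  rw [fibS, Complex.ofReal_sum, Finset.sum_mul]
  refine Finset.sum_congr rfl fun k hk => ?_
  rw [Finset.mem_filter] at hk
  rw [hk.2]
  norm_cast

lemma sc_shiftOrtho_of_fib (N : ℕ) (hN : 0 < N) (c : ℤ →₀ ℂ)
    (h : ∀ r ∈ Finset.range N, fibS N c (r:ℤ) = 1 / (N:ℝ)^2) :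
    ShiftOrthoFun N (scFun N c) := by
  intro m
  rw [sc_ortho_eval N hN c m]
  have hterm : ∀ r ∈ Finset.range N, ((fibS N c (r:ℤ) : ℝ) : ℂ) *
      Complex.exp (2 * Real.pi * Complex.I * ((r:ℕ) : ℂ) * (m : ℂ) / (N : ℂ))
      = (1 / (N:ℂ)^2) * Complex.exp (2 * Real.pi * Complex.I * (m : ℂ) / (N : ℂ)) ^ r := by
    intro r hr
    rw [h r hr]
    congr 1
    · push_cast; ring
    · rw [← Complex.exp_nat_mul]
      congr 1
      ring
  rw [Finset.sum_congr rfl hterm, ← Finset.mul_sum, sc_geom_sum N hN m]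
  have hNC : (N:ℂ) ≠ 0 := Nat.cast_ne_zero.mpr hN.ne'
  by_cases hd : (N:ℤ) ∣ m
  · rw [if_pos hd, if_pos hd]; field_simp
  · rw [if_neg hd, if_neg hd]; ring

lemma sc_fib_of_shiftOrtho (N : ℕ) (hN : 0 < N) (c : ℤ →₀ ℂ)
    (h : ShiftOrthoFun N (scFun N c)) :
    ∀ r ∈ Finset.range N, fibS N c (r:ℤ) = 1 / (N:ℝ)^2 := by
  intro r₀ hr₀
  have hr₀' := Finset.mem_range.mp hr₀
  have hNC : (N:ℂ) ≠ 0 := Nat.cast_ne_zero.mpr hN.ne'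
  have hE : ∀ m : ℤ, (N:ℂ) * ∑ r ∈ Finset.range N, ((fibS N c (r:ℤ) : ℝ) : ℂ) *
      Complex.exp (2 * Real.pi * Complex.I * ((r:ℕ) : ℂ) * (m : ℂ) / (N : ℂ))
      = if (N:ℤ) ∣ m then 1 else 0 := by
    intro m
    rw [← sc_ortho_eval N hN c m, h m]
  have hgeom : ∀ r ∈ Finset.range N,
      ∑ m ∈ Finset.range N,
        Complex.exp (2 * Real.pi * Complex.I * (((r:ℤ) - (r₀:ℤ) : ℤ) : ℂ) / (N : ℂ)) ^ m
      = if r = r₀ then (N:ℂ) else 0 := by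
    intro r hr
    have hr' := Finset.mem_range.mp hr
    rw [sc_geom_sum N hN ((r:ℤ) - (r₀:ℤ))]
    by_cases h' : r = r₀
    · subst h'; simp
    · rw [if_neg h', if_neg]
      intro hdvd
      have hdne : ((r:ℤ) - (r₀:ℤ)) ≠ 0 := by
        intro h0; exact h' (by omega)
      have hlt : |(r:ℤ) - (r₀:ℤ)| < N := abs_lt.mpr ⟨by omega, by omega⟩
      exact absurd (Int.le_of_dvd (abs_pos.mpr hdne) ((dvd_abs _ _).mpr hdvd))
        (not_le.mpr hlt)
  have key : ∑ m ∈ Finset.range N,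
      ((N:ℂ) * ∑ r ∈ Finset.range N, ((fibS N c (r:ℤ) : ℝ) : ℂ) *
        Complex.exp (2 * Real.pi * Complex.I * ((r:ℕ) : ℂ) * ((m:ℤ) : ℂ) / (N : ℂ)))
        * Complex.exp (2 * Real.pi * Complex.I * ((-(r₀:ℤ) : ℤ) : ℂ) / (N : ℂ)) ^ m
      = ∑ m ∈ Finset.range N,
      (if (N:ℤ) ∣ (m:ℤ) then (1:ℂ) else 0)
        * Complex.exp (2 * Real.pi * Complex.I * ((-(r₀:ℤ) : ℤ) : ℂ) / (N : ℂ)) ^ m := by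
    refine Finset.sum_congr rfl fun m _ => ?_
    rw [hE (m:ℤ)]
  have hrhs : ∑ m ∈ Finset.range N,
      (if (N:ℤ) ∣ (m:ℤ) then (1:ℂ) else 0)
        * Complex.exp (2 * Real.pi * Complex.I * ((-(r₀:ℤ) : ℤ) : ℂ) / (N : ℂ)) ^ m = 1 := by
    have hterm : ∀ m ∈ Finset.range N,
        (if (N:ℤ) ∣ (m:ℤ) then (1:ℂ) else 0)
          * Complex.exp (2 * Real.pi * Complex.I * ((-(r₀:ℤ) : ℤ) : ℂ) / (N : ℂ)) ^ m
        = if m = 0 then 1 else 0 := by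
      intro m hm
      rw [Finset.mem_range] at hm
      by_cases h0 : m = 0
      · subst h0; simp
      · have hnd : ¬ (N:ℤ) ∣ (m:ℤ) := by
          intro hdvd
          have := Int.le_of_dvd (by exact_mod_cast Nat.pos_of_ne_zero h0) hdvd
          omega
        rw [if_neg hnd, if_neg h0, zero_mul]
    rw [Finset.sum_congr rfl hterm, Finset.sum_ite_eq' (Finset.range N) 0]
    rw [if_pos (Finset.mem_range.mpr hN)]
  have swap : ∀ m ∈ Finset.range N, ∀ r ∈ Finset.range N,
      ((fibS N c (r:ℤ) : ℝ) : ℂ) *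
        Complex.exp (2 * Real.pi * Complex.I * ((r:ℕ) : ℂ) * ((m:ℤ) : ℂ) / (N : ℂ))
        * Complex.exp (2 * Real.pi * Complex.I * ((-(r₀:ℤ) : ℤ) : ℂ) / (N : ℂ)) ^ m
      = ((fibS N c (r:ℤ) : ℝ) : ℂ) *
        Complex.exp (2 * Real.pi * Complex.I * (((r:ℤ) - (r₀:ℤ) : ℤ) : ℂ) / (N : ℂ)) ^ m := by
    intro m _ r _
    rw [mul_assoc]
    congr 1
    rw [← Complex.exp_nat_mul, ← Complex.exp_nat_mul, ← Complex.exp_add]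
    congr 1
    push_cast
    ring
  have hlhs : ∑ m ∈ Finset.range N,
      ((N:ℂ) * ∑ r ∈ Finset.range N, ((fibS N c (r:ℤ) : ℝ) : ℂ) *
        Complex.exp (2 * Real.pi * Complex.I * ((r:ℕ) : ℂ) * ((m:ℤ) : ℂ) / (N : ℂ)))
        * Complex.exp (2 * Real.pi * Complex.I * ((-(r₀:ℤ) : ℤ) : ℂ) / (N : ℂ)) ^ m
      = (N:ℂ)^2 * ((fibS N c (r₀:ℤ) : ℝ) : ℂ) := by
    have e1 : ∀ m ∈ Finset.range N,
        ((N:ℂ) * ∑ r ∈ Finset.range N, ((fibS N c (r:ℤ) : ℝ) : ℂ) *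
          Complex.exp (2 * Real.pi * Complex.I * ((r:ℕ) : ℂ) * ((m:ℤ) : ℂ) / (N : ℂ)))
          * Complex.exp (2 * Real.pi * Complex.I * ((-(r₀:ℤ) : ℤ) : ℂ) / (N : ℂ)) ^ m
        = (N:ℂ) * ∑ r ∈ Finset.range N, ((fibS N c (r:ℤ) : ℝ) : ℂ) *
            Complex.exp (2 * Real.pi * Complex.I * (((r:ℤ) - (r₀:ℤ) : ℤ) : ℂ) / (N : ℂ)) ^ m := by
      intro m hm
      rw [mul_assoc, Finset.sum_mul]
      congr 1
      exact Finset.sum_congr rfl fun r hr => swap m hm r hr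
    rw [Finset.sum_congr rfl e1, ← Finset.mul_sum, Finset.sum_comm]
    have e2 : ∀ r ∈ Finset.range N,
        ∑ m ∈ Finset.range N, ((fibS N c (r:ℤ) : ℝ) : ℂ) *
          Complex.exp (2 * Real.pi * Complex.I * (((r:ℤ) - (r₀:ℤ) : ℤ) : ℂ) / (N : ℂ)) ^ m
        = if r = r₀ then ((fibS N c (r:ℤ) : ℝ) : ℂ) * N else 0 := by
      intro r hr
      rw [← Finset.mul_sum, hgeom r hr]
      split_ifs <;> simp
    rw [Finset.sum_congr rfl e2, Finset.sum_ite_eq' (Finset.range N) r₀]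
    rw [if_pos hr₀]
    ring
  have hfin : (N:ℂ)^2 * ((fibS N c (r₀:ℤ) : ℝ) : ℂ) = 1 := by
    rw [← hlhs, key, hrhs]
  have hre : ((N:ℝ)^2 * fibS N c (r₀:ℤ) : ℝ) = 1 := by
    exact_mod_cast hfin
  have hN2 : (N:ℝ)^2 ≠ 0 := by positivity
  field_simp at hre ⊢
  linarith

lemma scFun_eq_sum_subset (N : ℕ) (c : ℤ →₀ ℂ) {s : Finset ℤ} (hs : c.support ⊆ s) (x : ℝ) :
    scFun N c x
      = ∑ n ∈ s, c n * Complex.exp (2 * Real.pi * Complex.I * (n : ℂ) * (x : ℂ) / (N : ℂ)) :=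
  Finset.sum_subset hs (fun n _ hn => by
    rw [Finsupp.notMem_support_iff.mp hn, zero_mul])

lemma sc_sub (N : ℕ) (a b : ℤ →₀ ℂ) (x : ℝ) :
    scFun N (a - b) x = scFun N a x - scFun N b x := by
  rw [scFun_eq_sum_subset N (a-b) (s := a.support ∪ b.support) Finsupp.support_sub x,
    scFun_eq_sum_subset N a Finset.subset_union_left x,
    scFun_eq_sum_subset N b Finset.subset_union_right x, ← Finset.sum_sub_distrib]
  refine Finset.sum_congr rfl fun n _ => ?_
  rw [Finsupp.sub_apply, sub_mul]

lemma sc_parseval (N : ℕ) (hN : 0 < N) (c : ℤ →₀ ℂ) {s : Finset ℤ} (hs : c.support ⊆ s) :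
    (∫ x in (0:ℝ)..(N:ℝ), ‖scFun N c x‖^2) = N * ∑ k ∈ s, ‖c k‖^2 := by
  have h0 := sc_inner N hN c c 0
  have hterm : ∀ k ∈ c.support, (starRingEnd ℂ) (c k) * c k *
      Complex.exp (2*Real.pi*Complex.I*(k:ℂ)*(((0:ℤ):ℤ):ℂ)/(N:ℂ)) = ((‖c k‖^2 : ℝ) : ℂ) := by
    intro k _
    rw [Int.cast_zero, mul_zero, zero_div, Complex.exp_zero, mul_one,
      mul_comm ((starRingEnd ℂ) (c k)), Complex.mul_conj']
    norm_cast
  rw [Finset.sum_congr rfl hterm] at h0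
  have hext : ∑ k ∈ c.support, ((‖c k‖^2 : ℝ):ℂ) = ∑ k ∈ s, ((‖c k‖^2:ℝ):ℂ) := by
    apply Finset.sum_subset hs
    intro k _ hk
    rw [Finsupp.notMem_support_iff.mp hk]; simp
  rw [hext] at h0
  have hpt : ∀ x : ℝ, (starRingEnd ℂ) (scFun N c (x - ((0:ℤ):ℝ))) * scFun N c x
      = ((‖scFun N c x‖^2 : ℝ) : ℂ) := by
    intro x
    rw [Int.cast_zero, sub_zero, mul_comm, Complex.mul_conj']
    norm_cast
  simp_rw [hpt] at h0
  rw [intervalIntegral.integral_ofReal] at h0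
  have hfin : ((∫ x in (0:ℝ)..(N:ℝ), ‖scFun N c x‖^2 : ℝ) : ℂ)
      = (((N:ℝ) * ∑ k ∈ s, ‖c k‖^2 : ℝ) : ℂ) := by
    rw [h0]; push_cast; ring
  exact_mod_cast hfin

lemma sc_M_eq_fib (N : ℕ) (hN : 0 < N) (cf : ℤ →₀ ℂ) (r : ℤ) (hr0 : 0 ≤ r) (hrN : r < N) :
    (∑' j : ℤ, ‖cf (r + (N:ℤ)*j)‖^2) = fibS N cf r := by
  have hNZ : (N:ℤ) ≠ 0 := by exact_mod_cast hN.ne'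
  set fib := cf.support.filter (fun k => k % (N:ℤ) = r) with hfib
  set t := fib.image (fun k => k / (N:ℤ)) with ht
  have hrec : ∀ k ∈ fib, r + (N:ℤ) * (k / (N:ℤ)) = k := by
    intro k hk
    rw [hfib, Finset.mem_filter] at hk
    have h := Int.mul_ediv_add_emod k (N:ℤ)
    rw [← hk.2]
    linarith [h]
  have hdiv : ∀ j : ℤ, (r + (N:ℤ)*j) / (N:ℤ) = j := by
    intro j
    rw [Int.add_mul_ediv_left r j hNZ, Int.ediv_eq_zero_of_lt hr0 hrN, zero_add]
  have hvanish : ∀ j : ℤ, j ∉ t → ‖cf (r + (N:ℤ)*j)‖^2 = 0 := by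
    intro j hj
    by_contra h
    have hksupp : (r + (N:ℤ)*j) ∈ cf.support := by
      rw [Finsupp.mem_support_iff]
      intro h0; apply h; rw [h0]; simp
    have hkmod : (r + (N:ℤ)*j) % (N:ℤ) = r := by
      rw [Int.add_mul_emod_self_left, Int.emod_eq_of_lt hr0 hrN]
    apply hj
    rw [ht, Finset.mem_image]
    exact ⟨r + (N:ℤ)*j, by rw [hfib, Finset.mem_filter]; exact ⟨hksupp, hkmod⟩, hdiv j⟩
  rw [tsum_eq_sum hvanish, ht, Finset.sum_image (fun k hk k' hk' hkk' => by
    rw [← hrec k hk, ← hrec k' hk', hkk'])]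
  rw [fibS, ← hfib]
  exact Finset.sum_congr rfl fun k hk => by rw [hrec k hk]

lemma fibS_subset (N : ℕ) (c : ℤ →₀ ℂ) (r : ℤ) {s : Finset ℤ} (hs : c.support ⊆ s) :
    fibS N c r = ∑ k ∈ s.filter (fun k => k % (N:ℤ) = r), ‖c k‖^2 := by
  rw [fibS]
  apply Finset.sum_subset (Finset.filter_subset_filter _ hs)
  intro k hks hkn
  rw [Finset.mem_filter] at hks hkn
  have : c k = 0 := by
    by_contra h
    exact hkn ⟨Finsupp.mem_support_iff.mpr h, hks.2⟩
  simp [this]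

lemma sc_fiber_min (Mr : ℝ) (hMr : 0 < Mr) (N : ℕ) (hN : 0 < N) (A : Finset ℤ)
    (f g p : ℤ → ℂ)
    (hp : ∀ k ∈ A, p k = f k / ((N:ℂ) * (Real.sqrt Mr : ℂ)))
    (hf : ∑ k ∈ A, ‖f k‖^2 = Mr)
    (hg : ∑ k ∈ A, ‖g k‖^2 = 1/(N:ℝ)^2) :
    ∑ k ∈ A, ‖f k - p k‖^2 ≤ ∑ k ∈ A, ‖f k - g k‖^2 := by
  have hNR : (0:ℝ) < N := by exact_mod_cast hN
  set s := Real.sqrt Mr with hs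
  have hs0 : 0 < s := Real.sqrt_pos.mpr hMr
  have hs2 : s^2 = Mr := Real.sq_sqrt hMr.le
  -- LHS
  have hterm : ∀ k ∈ A, ‖f k - p k‖^2 = ‖f k‖^2 * (1 - 1/((N:ℝ)*s))^2 := by
    intro k hk
    rw [hp k hk]
    have : f k - f k / ((N:ℂ) * (s : ℂ)) = f k * ((1 - 1/((N:ℝ)*s) : ℝ) : ℂ) := by
      push_cast
      have hd : ((N:ℂ) * (s:ℂ)) ≠ 0 := by
        apply mul_ne_zero
        · exact_mod_cast hNR.ne'
        · exact_mod_cast hs0.ne'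
      field_simp
    rw [this, norm_mul, mul_pow, Complex.norm_real]
    congr 1
    rw [Real.norm_eq_abs, _root_.sq_abs]
  have hLHS : ∑ k ∈ A, ‖f k - p k‖^2 = (s - 1/(N:ℝ))^2 := by
    rw [Finset.sum_congr rfl hterm, ← Finset.sum_mul, hf]
    rw [← hs2]
    rw [← mul_pow]
    congr 1
    field_simp
  rw [hLHS]
  -- RHS
  have hexp : ∀ k ∈ A, ‖f k - g k‖^2
      = ‖f k‖^2 - 2 * (f k * (starRingEnd ℂ) (g k)).re + ‖g k‖^2 := by
    intro k _
    have h1 : ∀ z : ℂ, ‖z‖^2 = Complex.normSq z := fun z => by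
      rw [← Complex.sq_norm]
    rw [h1, h1, h1, Complex.normSq_sub]
    ring
  rw [Finset.sum_congr rfl hexp]
  rw [Finset.sum_add_distrib, Finset.sum_sub_distrib, hf, hg, ← Finset.mul_sum]
  -- Cauchy-Schwarz bound
  have hre : ∀ k ∈ A, (f k * (starRingEnd ℂ) (g k)).re ≤ ‖f k‖ * ‖g k‖ := by
    intro k _
    calc (f k * (starRingEnd ℂ) (g k)).re ≤ ‖f k * (starRingEnd ℂ) (g k)‖ :=
          Complex.re_le_norm _
      _ = ‖f k‖ * ‖g k‖ := by
          rw [norm_mul, Complex.norm_conj]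
  have hCS : (∑ k ∈ A, ‖f k‖ * ‖g k‖)^2 ≤ Mr * (1/(N:ℝ)^2) := by
    calc (∑ k ∈ A, ‖f k‖ * ‖g k‖)^2 ≤ (∑ k ∈ A, ‖f k‖^2) * (∑ k ∈ A, ‖g k‖^2) :=
          Finset.sum_mul_sq_le_sq_mul_sq A _ _
      _ = Mr * (1/(N:ℝ)^2) := by rw [hf, hg]
  have hsumnn : 0 ≤ ∑ k ∈ A, ‖f k‖ * ‖g k‖ :=
    Finset.sum_nonneg fun k _ => mul_nonneg (norm_nonneg _) (norm_nonneg _)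
  have hsN : 0 < s / (N:ℝ) := div_pos hs0 hNR
  have heq : Mr * (1/(N:ℝ)^2) = (s/(N:ℝ))^2 := by
    rw [div_pow, hs2]; ring
  rw [heq] at hCS
  have hbound : ∑ k ∈ A, ‖f k‖ * ‖g k‖ ≤ s / N := by
    nlinarith [hCS, hsumnn, hsN]
  have hre2 : ∑ k ∈ A, (f k * (starRingEnd ℂ) (g k)).re ≤ s / N :=
    le_trans (Finset.sum_le_sum hre) hbound
  have hexpand : (s - 1/(N:ℝ))^2 = Mr - 2*(s/(N:ℝ)) + 1/(N:ℝ)^2 := by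
    rw [← hs2]; field_simp; ring
  rw [hexpand]
  linarith [hre2]

/-- **Correctness of the shift-orthogonal projection algorithm.** If every
Brillouin-zone fiber mass `M r = ∑ⱼ |c_{r+Nj}(f)|²` is positive, then the
function `ψ` with Fourier coefficients `cₙ(ψ) = cₙ(f) / (N √(M (n mod N)))` is
shift-orthogonal and minimizes `‖f − ·‖₂` among all shift-orthogonal supercell
trigonometric polynomials. -/
theorem projection_correct (N : ℕ) (hN : 0 < N) (cf : ℤ →₀ ℂ)
    (M : ℤ → ℝ) (hM : ∀ r : ℤ, M r = ∑' j : ℤ, ‖cf (r + (N : ℤ) * j)‖ ^ 2)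
    (hMpos : ∀ r ∈ Finset.range N, 0 < M (r : ℤ))
    (cψ : ℤ →₀ ℂ)
    (hcψ : ∀ n : ℤ, cψ n = cf n / ((N : ℂ) * (Real.sqrt (M (n % (N : ℤ))) : ℂ))) :
    ShiftOrthoFun N (scFun N cψ) ∧
      ∀ cφ : ℤ →₀ ℂ, ShiftOrthoFun N (scFun N cφ) →
        (∫ x in (0:ℝ)..(N:ℝ), ‖scFun N cf x - scFun N cψ x‖ ^ 2) ≤
          ∫ x in (0:ℝ)..(N:ℝ), ‖scFun N cf x - scFun N cφ x‖ ^ 2 := by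
  have hMfib : ∀ r ∈ Finset.range N, M (r:ℤ) = fibS N cf (r:ℤ) := by
    intro r hr
    rw [hM, sc_M_eq_fib N hN cf r (by positivity)
      (by exact_mod_cast Finset.mem_range.mp hr)]
  have hsupp : cψ.support ⊆ cf.support := by
    intro k hk
    rw [Finsupp.mem_support_iff] at *
    intro h0; apply hk; rw [hcψ, h0, zero_div]
  have hψfib : ∀ r ∈ Finset.range N, fibS N cψ (r:ℤ) = 1/(N:ℝ)^2 := by
    intro r hr
    have hMr := hMpos r hr
    rw [fibS_subset N cψ (r:ℤ) hsupp]
    have hterm : ∀ k ∈ cf.support.filter (fun k => k % (N:ℤ) = (r:ℤ)),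
        ‖cψ k‖^2 = ‖cf k‖^2 / ((N:ℝ)^2 * M (r:ℤ)) := by
      intro k hk
      rw [Finset.mem_filter] at hk
      rw [hcψ, hk.2, norm_div, div_pow, norm_mul, Complex.norm_natCast, Complex.norm_real,
        Real.norm_eq_abs, _root_.abs_of_nonneg (Real.sqrt_nonneg _), mul_pow,
        Real.sq_sqrt hMr.le]
    rw [Finset.sum_congr rfl hterm, ← Finset.sum_div, ← fibS, ← hMfib r hr]
    have hN2 : (N:ℝ) ≠ 0 := by positivity
    field_simp
  refine ⟨sc_shiftOrtho_of_fib N hN cψ hψfib, ?_⟩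
  intro cφ hφ
  have hφfib := sc_fib_of_shiftOrtho N hN cφ hφ
  set U := (cf.support ∪ cψ.support) ∪ cφ.support with hU
  have hcfU : cf.support ⊆ U := by
    intro k hk; rw [hU]; simp [hk]
  have hcψU : cψ.support ⊆ U := by
    intro k hk; rw [hU]; simp [hk]
  have hcφU : cφ.support ⊆ U := by
    intro k hk; rw [hU]; simp [hk]
  have hsubψ : (cf - cψ).support ⊆ U :=
    Finsupp.support_sub.trans (Finset.union_subset hcfU hcψU)
  have hsubφ : (cf - cφ).support ⊆ U :=
    Finsupp.support_sub.trans (Finset.union_subset hcfU hcφU)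
  have hP1 : (∫ x in (0:ℝ)..(N:ℝ), ‖scFun N cf x - scFun N cψ x‖^2)
      = N * ∑ k ∈ U, ‖(cf - cψ) k‖^2 := by
    simp_rw [← sc_sub N cf cψ]
    exact sc_parseval N hN (cf - cψ) hsubψ
  have hP2 : (∫ x in (0:ℝ)..(N:ℝ), ‖scFun N cf x - scFun N cφ x‖^2)
      = N * ∑ k ∈ U, ‖(cf - cφ) k‖^2 := by
    simp_rw [← sc_sub N cf cφ]
    exact sc_parseval N hN (cf - cφ) hsubφ
  rw [hP1, hP2]
  apply mul_le_mul_of_nonneg_left _ (by positivity : (0:ℝ) ≤ N)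
  rw [sc_fiber_decomp N hN U (fun k => ‖(cf - cψ) k‖^2),
    sc_fiber_decomp N hN U (fun k => ‖(cf - cφ) k‖^2)]
  apply Finset.sum_le_sum
  intro r hr
  have hMr := hMpos r hr
  simp only [Finsupp.sub_apply]
  apply sc_fiber_min (M (r:ℤ)) hMr N hN _ (fun k => cf k) (fun k => cφ k) (fun k => cψ k)
  · intro k hk
    rw [Finset.mem_filter] at hk
    rw [hcψ, hk.2]
  · rw [← fibS_subset N cf (r:ℤ) hcfU, ← hMfib r hr]
  · rw [← fibS_subset N cφ (r:ℤ) hcφU]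
    exact hφfib r hr
end
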